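/- (Entanglement of the universal Toeplitz matrix) For every n ≥ 2, the matrix-valued function T_n : S¹ → M_n(ℂ), viewed as a positive element of the tensor product of trigonometric polynomials of degree ≤ n−1 with M_n(ℂ), is not separable: there do not exist finitely many trigonometric polynomials f_1,…,f_m of degree at most n−1 that are nonnegative on S¹ and positive semidefinite matrices b_1,…,b_m ∈ M_n(ℂ) with T_n(z) = Σ_j f_j(z) b_j for all z ∈ S¹. -/

import Mathlib

open Matrix ComplexOrder

/-- The universal positive Toeplitz matrix `T_n(z)`, with `(k,j)` entry `z^(k-j)`. -/
noncomputable def Tmat (n : ℕ) (z : ℂ) : Matrix (Fin n) (Fin n) ℂ :=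
  Matrix.of fun k j => z ^ ((k : ℤ) - (j : ℤ))

/-- The unit circle in `ℂ` is infinite. -/
lemma circle_infinite : {z : ℂ | ‖z‖ = 1}.Infinite := by
  refine Set.infinite_of_injective_forall_mem
    (f := fun x : ℝ => (1 + x * Complex.I) / (1 - x * Complex.I)) ?_ ?_
  · intro x y hxy
    have hx : (1 - (x:ℂ) * Complex.I) ≠ 0 := by
      intro h
      have := congrArg Complex.re h
      simp at this
    have hy : (1 - (y:ℂ) * Complex.I) ≠ 0 := by
      intro h
      have := congrArg Complex.re h
      simp at this
    rw [div_eq_div_iff hx hy] at hxy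
    have : ((2:ℝ) * x : ℂ) * Complex.I = ((2:ℝ) * y : ℂ) * Complex.I := by
      push_cast
      ring_nf
      ring_nf at hxy
      linear_combination hxy
    have h2 : (2:ℝ) * x = 2 * y := by
      have := mul_right_cancel₀ Complex.I_ne_zero this
      exact_mod_cast this
    linarith
  · intro x
    have hconj : (starRingEnd ℂ) (1 + (x:ℂ) * Complex.I) = 1 - (x:ℂ) * Complex.I := by
      simp [Complex.ext_iff]
    have hx : (1 - (x:ℂ) * Complex.I) ≠ 0 := by
      intro h
      have := congrArg Complex.re h
      simp at this
    have hnum : (1 + (x:ℂ) * Complex.I) ≠ 0 := by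
      intro h
      have := congrArg Complex.re h
      simp at this
    simp only [Set.mem_setOf_eq, norm_div]
    rw [← hconj, Complex.norm_conj]
    exact div_self (norm_ne_zero_iff.mpr hnum)

/-- **Entanglement of the universal Toeplitz matrix**: for `n ≥ 2`, `T_n` cannot be written
as a finite sum `Σ_j f_j(z) b_j` with `f_j` trigonometric polynomials of degree at most
`n - 1` that are nonnegative on the circle and `b_j` positive semidefinite matrices. -/
theorem stmt11 (n : ℕ) (hn : 2 ≤ n) :
    ¬ ∃ (m : ℕ) (α : Fin m → ℤ → ℂ) (b : Fin m → Matrix (Fin n) (Fin n) ℂ),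
      (∀ j (z : ℂ), ‖z‖ = 1 →
        0 ≤ ∑ k ∈ Finset.Icc (-(n : ℤ) + 1) ((n : ℤ) - 1), α j k * z ^ k) ∧
      (∀ j, (b j).PosSemidef) ∧
      (∀ z : ℂ, ‖z‖ = 1 →
        Tmat n z =
          ∑ j, (∑ k ∈ Finset.Icc (-(n : ℤ) + 1) ((n : ℤ) - 1), α j k * z ^ k) • b j) := by
  rintro ⟨m, α, b, hpos, hpsd, heq⟩
  set f : Fin m → ℂ → ℂ := fun j z => ∑ k ∈ Finset.Icc (-(n : ℤ) + 1) ((n : ℤ) - 1), α j k * z ^ k with hf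
  -- Step A: for z on the circle and u annihilated by the covector (conj z)^i, each term vanishes
  have stepA : ∀ z : ℂ, ‖z‖ = 1 →
      ∀ u : Fin n → ℂ, (fun i : Fin n => ((starRingEnd ℂ) z) ^ (i : ℕ)) ⬝ᵥ u = 0 →
      ∀ j, f j z * (star u ⬝ᵥ b j *ᵥ u) = 0 := by
    intro z hz u hu j
    have hz0 : z ≠ 0 := by
      intro h; rw [h] at hz; simp at hz
    have hzc : (starRingEnd ℂ) z = z⁻¹ := by
      have : z * (starRingEnd ℂ) z = 1 := by
        rw [Complex.mul_conj]
        norm_cast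
        rw [Complex.normSq_eq_norm_sq, hz]; norm_num
      field_simp
      linear_combination this
    have hTu : Tmat n z *ᵥ u = 0 := by
      funext k
      have : (Tmat n z *ᵥ u) k = z ^ (k : ℤ) * ((fun i : Fin n => ((starRingEnd ℂ) z) ^ (i : ℕ)) ⬝ᵥ u) := by
        simp only [mulVec, dotProduct, Finset.mul_sum, Tmat, Matrix.of_apply]
        refine Finset.sum_congr rfl fun i _ => ?_
        rw [hzc, zpow_sub₀ hz0, div_eq_mul_inv, ← _root_.inv_zpow, zpow_natCast]
        ring_nf
        norm_cast
      rw [this, hu, mul_zero]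
      rfl
    have h0 : (0:ℂ) = ∑ j, f j z * (star u ⬝ᵥ b j *ᵥ u) := by
      have := congrArg (fun M => star u ⬝ᵥ M *ᵥ u) (heq z hz)
      simp only [hTu, dotProduct_zero] at this
      rw [this]
      have key : ∀ (s : Finset (Fin m)),
          star u ⬝ᵥ (∑ j ∈ s, f j z • b j) *ᵥ u = ∑ j ∈ s, f j z * (star u ⬝ᵥ b j *ᵥ u) := by
        intro s
        induction s using Finset.induction with
        | empty => simp
        | insert _ _ h ih =>
          rw [Finset.sum_insert h, Finset.sum_insert h, add_mulVec, dotProduct_add, ih,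
            smul_mulVec, dotProduct_smul, smul_eq_mul]
      exact key Finset.univ
    have hterm : ∀ j ∈ Finset.univ, 0 ≤ f j z * (star u ⬝ᵥ b j *ᵥ u) :=
      fun j _ => mul_nonneg (hpos j z hz) ((hpsd j).dotProduct_mulVec_nonneg u)
    exact (Finset.sum_eq_zero_iff_of_nonneg hterm).mp h0.symm j (Finset.mem_univ j)
  -- Step B: if f j is nonzero at two distinct circle points, then b j = 0
  have stepB : ∀ j, ∀ z₁ z₂ : ℂ, ‖z₁‖ = 1 → ‖z₂‖ = 1 → z₁ ≠ z₂ →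
      f j z₁ ≠ 0 → f j z₂ ≠ 0 → b j = 0 := by
    intro j z₁ z₂ hz₁ hz₂ hne hf₁ hf₂
    set c₁ := (starRingEnd ℂ) z₁ with hc₁
    set c₂ := (starRingEnd ℂ) z₂ with hc₂
    have hc : c₁ ≠ c₂ := fun h => hne (star_injective h)
    have hd : c₁ - c₂ ≠ 0 := sub_ne_zero.mpr hc
    have hk1 : ∀ u : Fin n → ℂ, (fun i : Fin n => c₁ ^ (i : ℕ)) ⬝ᵥ u = 0 → b j *ᵥ u = 0 := by
      intro u hu
      have := stepA z₁ hz₁ u hu j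
      rcases mul_eq_zero.mp this with h | h
      · exact absurd h hf₁
      · exact ((hpsd j).dotProduct_mulVec_zero_iff u).mp h
    have hk2 : ∀ u : Fin n → ℂ, (fun i : Fin n => c₂ ^ (i : ℕ)) ⬝ᵥ u = 0 → b j *ᵥ u = 0 := by
      intro u hu
      have := stepA z₂ hz₂ u hu j
      rcases mul_eq_zero.mp this with h | h
      · exact absurd h hf₂
      · exact ((hpsd j).dotProduct_mulVec_zero_iff u).mp h
    have h0 : (0:ℕ) < n := by omega
    have h1 : (1:ℕ) < n := by omega
    set i0 : Fin n := ⟨0, h0⟩ with hi0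
    set i1 : Fin n := ⟨1, h1⟩ with hi1
    set d := c₁ - c₂ with hdd
    set p : Fin n → ℂ := (-c₂/d) • Pi.single (M := fun _ : Fin n => ℂ) i0 1
      + (1/d) • Pi.single (M := fun _ : Fin n => ℂ) i1 1 with hp
    set q : Fin n → ℂ := (c₁/d) • Pi.single (M := fun _ : Fin n => ℂ) i0 1
      + (-1/d) • Pi.single (M := fun _ : Fin n => ℂ) i1 1 with hq
    have hsing : ∀ c : ℂ, ∀ (i : Fin n) (a : ℂ),
        (fun t : Fin n => c ^ (t : ℕ)) ⬝ᵥ (a • Pi.single (M := fun _ : Fin n => ℂ) i 1)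
          = a * c ^ (i : ℕ) := by
      intro c i a
      rw [dotProduct_smul, dotProduct_single]
      simp [mul_comm]
    have hev0 : ∀ c : ℂ, c ^ ((i0 : Fin n) : ℕ) = 1 := fun c => pow_zero c
    have hev1 : ∀ c : ℂ, c ^ ((i1 : Fin n) : ℕ) = c := fun c => pow_one c
    have hsp1 : (fun t : Fin n => c₁ ^ (t : ℕ)) ⬝ᵥ p = 1 := by
      rw [hp, dotProduct_add, hsing, hsing, hev0, hev1]
      field_simp
      ring
    have hsp2 : (fun t : Fin n => c₂ ^ (t : ℕ)) ⬝ᵥ p = 0 := by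
      rw [hp, dotProduct_add, hsing, hsing, hev0, hev1]
      field_simp
      ring
    have hsq1 : (fun t : Fin n => c₁ ^ (t : ℕ)) ⬝ᵥ q = 0 := by
      rw [hq, dotProduct_add, hsing, hsing, hev0, hev1]
      field_simp
      ring
    have hsq2 : (fun t : Fin n => c₂ ^ (t : ℕ)) ⬝ᵥ q = 1 := by
      rw [hq, dotProduct_add, hsing, hsing, hev0, hev1]
      field_simp
      ring
    have hall : ∀ x : Fin n → ℂ, b j *ᵥ x = 0 := by
      intro x
      set a₁ := (fun t : Fin n => c₁ ^ (t : ℕ)) ⬝ᵥ x with ha₁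
      set a₂ := (fun t : Fin n => c₂ ^ (t : ℕ)) ⬝ᵥ x with ha₂
      have hbu : b j *ᵥ (x - a₁ • p - a₂ • q) = 0 := by
        apply hk1
        rw [dotProduct_sub, dotProduct_sub, dotProduct_smul, dotProduct_smul, hsp1, hsq1, ← ha₁]
        simp
      have hbp : b j *ᵥ p = 0 := hk2 p hsp2
      have hbq : b j *ᵥ q = 0 := hk1 q hsq1
      have hx : x = (x - a₁ • p - a₂ • q) + a₁ • p + a₂ • q := by abel
      rw [hx, mulVec_add, mulVec_add, mulVec_smul, mulVec_smul, hbu, hbp, hbq]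
      simp
    ext k i
    have := congrFun (hall (Pi.single i 1)) k
    rw [mulVec_single] at this
    simpa using this
  -- Step C: for each j either f j vanishes on the circle or b j = 0
  have stepC : ∀ j, ∀ z : ℂ, ‖z‖ = 1 → f j z • b j = 0 := by
    intro j
    by_cases hj : ∃ z₀ : ℂ, ‖z₀‖ = 1 ∧ f j z₀ ≠ 0
    · obtain ⟨z₀, hz₀, hfz₀⟩ := hj
      have hz₀0 : z₀ ≠ 0 := by intro h; rw [h] at hz₀; simp at hz₀
      -- build polynomial
      set P : Polynomial ℂ := ∑ k ∈ Finset.Icc (-(n : ℤ) + 1) ((n : ℤ) - 1),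
        Polynomial.C (α j k) * Polynomial.X ^ (k + ((n:ℤ) - 1)).toNat with hP
      have hPeval : ∀ z : ℂ, z ≠ 0 → P.eval z = z ^ ((n:ℤ) - 1) * f j z := by
        intro z hz0
        rw [hP, Polynomial.eval_finset_sum, hf, Finset.mul_sum]
        refine Finset.sum_congr rfl fun k hk => ?_
        rw [Finset.mem_Icc] at hk
        have hk0 : 0 ≤ k + ((n:ℤ) - 1) := by omega
        simp only [Polynomial.eval_mul, Polynomial.eval_C, Polynomial.eval_pow, Polynomial.eval_X]
        rw [← zpow_natCast z, Int.toNat_of_nonneg hk0, zpow_add₀ hz0]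
        ring
      have hPne : P ≠ 0 := by
        intro h
        have := hPeval z₀ hz₀0
        rw [h] at this
        simp only [Polynomial.eval_zero] at this
        exact hfz₀ (by
          have hzp : z₀ ^ ((n:ℤ) - 1) ≠ 0 := zpow_ne_zero _ hz₀0
          rcases mul_eq_zero.mp this.symm with h | h
          exacts [absurd h hzp, h])
      have hZfin : {z : ℂ | ‖z‖ = 1 ∧ f j z = 0}.Finite := by
        apply Set.Finite.subset (Polynomial.finite_setOf_isRoot hPne)
        rintro z ⟨hz1, hz2⟩
        have hz0 : z ≠ 0 := by intro h; rw [h] at hz1; simp at hz1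
        show P.IsRoot z
        rw [Polynomial.IsRoot, hPeval z hz0, hz2, mul_zero]
      have hinf : ({z : ℂ | ‖z‖ = 1} \ {z : ℂ | ‖z‖ = 1 ∧ f j z = 0}).Infinite :=
        circle_infinite.diff hZfin
      obtain ⟨z₁, hz₁, z₂, hz₂, hne⟩ := hinf.nontrivial
      simp only [Set.mem_diff, Set.mem_setOf_eq, not_and] at hz₁ hz₂
      have hb0 : b j = 0 := stepB j z₁ z₂ hz₁.1 hz₂.1 hne (hz₁.2 hz₁.1) (hz₂.2 hz₂.1)
      intro z hz
      rw [hb0, smul_zero]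
    · push_neg at hj
      intro z hz
      rw [hj z hz, zero_smul]
  -- Conclusion: evaluate at z = 1
  have h1 : ‖(1:ℂ)‖ = 1 := by simp
  have := heq 1 h1
  rw [show (∑ j, (∑ k ∈ Finset.Icc (-(n : ℤ) + 1) ((n : ℤ) - 1), α j k * (1:ℂ) ^ k) • b j) = 0 from
    Finset.sum_eq_zero fun j _ => stepC j 1 h1] at this
  have h00 : Tmat n 1 ⟨0, by omega⟩ ⟨0, by omega⟩ = 1 := by
    simp [Tmat]
  rw [this] at h00
  simp at h00
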